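/- Let N ≥ 1 and let p ∈ (1, ∞) be such that r^{1/p} ≥ r/2 for every integer r with 1 ≤ r ≤ 2N. Then there exists a map f : T_N → ℓ_p(T_N) such that for all s, t ∈ T_N, (1/2) d(s,t) ≤ ‖f(s) - f(t)‖_{ℓ_p} ≤ d(s,t); that is, T_N Lipschitz embeds into ℓ_p(T_N) with distortion at most 2. -/
import Mathlib

def commonPrefixLen : List ℕ → List ℕ → ℕ
  | a :: s, b :: t => if a = b then commonPrefixLen s t + 1 else 0
  | _, _ => 0

def treeDist (s t : List ℕ) : ℕ :=
  (s.length - commonPrefixLen s t) + (t.length - commonPrefixLen s t)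

lemma cpl_le_left : ∀ s t : List ℕ, commonPrefixLen s t ≤ s.length
  | [], _ => by simp [commonPrefixLen]
  | a :: s, [] => by simp [commonPrefixLen]
  | a :: s, b :: t => by
      by_cases h : a = b <;> simp [commonPrefixLen, h, Nat.succ_le_succ (cpl_le_left s t)]

lemma cpl_comm : ∀ s t : List ℕ, commonPrefixLen s t = commonPrefixLen t s
  | [], [] => rfl
  | [], b :: t => rfl
  | a :: s, [] => rfl
  | a :: s, b :: t => by
      rcases eq_or_ne a b with h | h
      · simp [commonPrefixLen, h, cpl_comm s t]
      · simp [commonPrefixLen, h, h.symm]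

lemma cpl_self : ∀ s : List ℕ, commonPrefixLen s s = s.length
  | [] => rfl
  | a :: s => by simp [commonPrefixLen, cpl_self s]

lemma prefix_iff_le_cpl : ∀ (u s t : List ℕ), u <+: s →
    (u <+: t ↔ u.length ≤ commonPrefixLen s t)
  | [], s, t, _ => by simp
  | a :: u, s, [], h => by
      simp only [commonPrefixLen]
      constructor
      · rintro ⟨w, hw⟩; simp at hw
      · intro h'
        cases s <;> simp [commonPrefixLen] at h'
  | a :: u, [], t, h => absurd h (by rintro ⟨w, hw⟩; simp at hw)
  | a :: u, c :: s, b :: t, h => by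
      obtain ⟨w, hw⟩ := h
      injection hw with h1 h2
      subst h1
      by_cases hab : a = b
      · subst hab
        simp only [commonPrefixLen, reduceIte, if_pos rfl, List.cons_prefix_cons,
          List.length_cons, Nat.add_le_add_iff_right, true_and]
        exact prefix_iff_le_cpl u s t ⟨w, h2⟩
      · simp [commonPrefixLen, if_neg hab, List.cons_prefix_cons, hab]

lemma cpl_take_eq : ∀ s t : List ℕ,
    s.take (commonPrefixLen s t) = t.take (commonPrefixLen s t)
  | [], t => by cases t <;> simp [commonPrefixLen]
  | a :: s, [] => by simp [commonPrefixLen]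
  | a :: s, b :: t => by
      by_cases h : a = b <;> simp [commonPrefixLen, h, cpl_take_eq s t]

/-- If `p ∈ (1,∞)` satisfies `r^{1/p} ≥ r/2` for all integers `1 ≤ r ≤ 2N`, then
`T_N` Lipschitz embeds into `ℓ_p(T_N)` with distortion at most `2`. -/
theorem stmt_2 (N : ℕ) (hN : 1 ≤ N) (p : ℝ) (hp : 1 < p)
    (hpr : ∀ r : ℕ, 1 ≤ r → r ≤ 2 * N → (r : ℝ) ^ (1 / p) ≥ (r : ℝ) / 2) :
    ∃ f : {l : List ℕ // l.length ≤ N} →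
      lp (fun _ : {l : List ℕ // l.length ≤ N} => ℝ) (ENNReal.ofReal p),
      ∀ s t : {l : List ℕ // l.length ≤ N},
        (1 / 2 : ℝ) * (treeDist s.1 t.1 : ℝ) ≤ ‖f s - f t‖ ∧
        ‖f s - f t‖ ≤ (treeDist s.1 t.1 : ℝ) := by
  classical
  set T := {l : List ℕ // l.length ≤ N}
  set P : ENNReal := ENNReal.ofReal p with hP
  have hp0 : (0:ℝ) < p := by linarith
  have hPtop : P ≠ ⊤ := ENNReal.ofReal_ne_top
  have hPt : P.toReal = p := ENNReal.toReal_ofReal hp0.le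
  have hPt0 : 0 < P.toReal := by rw [hPt]; exact hp0
  haveI : Fact (1 ≤ P) := ⟨by rw [hP, ← ENNReal.ofReal_one]; exact ENNReal.ofReal_le_ofReal hp.le⟩
  -- the raw functions
  set F : T → T → ℝ := fun s u => if u.1 <+: s.1 then 1 else 0 with hF
  -- prefix finsets
  have hlen : ∀ (s : T) (k : ℕ), (s.1.take k).length ≤ N := fun s k => by
    simpa using le_trans (min_le_right _ _) s.2
  set PF : T → Finset T := fun s =>
    ((Finset.range (s.1.length + 1)).image (fun k => (⟨s.1.take k, hlen s k⟩ : T))) with hPF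
  have memPF : ∀ s u : T, u ∈ PF s ↔ u.1 <+: s.1 := by
    intro s u
    simp only [hPF, Finset.mem_image, Finset.mem_range]
    constructor
    · rintro ⟨k, _, hk⟩
      rw [← hk]
      exact List.take_prefix _ _
    · intro h
      exact ⟨u.1.length, by have := h.length_le; omega,
        Subtype.ext (List.prefix_iff_eq_take.mp h).symm⟩
  have hmem : ∀ s : T, Memℓp (F s) P := by
    intro s
    apply memℓp_gen
    apply summable_of_ne_finset_zero (s := PF s)
    intro u hu
    rw [memPF] at hu
    simp [hF, hu, Real.zero_rpow (ne_of_gt hPt0)]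
  set f : T → lp (fun _ : T => ℝ) P := fun s => ⟨F s, hmem s⟩ with hf
  refine ⟨f, fun s t => ?_⟩
  have key : ‖f s - f t‖ ^ p = (treeDist s.1 t.1 : ℝ) := by
    have hsum : ‖f s - f t‖ ^ P.toReal = ∑' u, ‖(F s u - F t u : ℝ)‖ ^ P.toReal :=
      lp.norm_rpow_eq_tsum hPt0 (f s - f t)
    rw [hPt] at hsum
    rw [hsum]
    set c := commonPrefixLen s.1 t.1 with hc
    have hcs : c ≤ s.1.length := cpl_le_left _ _
    have hct : c ≤ t.1.length := by rw [hc, cpl_comm]; exact cpl_le_left _ _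
    set Cond : T → Prop := fun u => ¬(u.1 <+: s.1 ↔ u.1 <+: t.1) with hCond
    set U : Finset T := PF s ∪ PF t with hU
    have h1 : (∑' u, ‖(F s u - F t u : ℝ)‖ ^ p) = ∑ u ∈ U, ‖(F s u - F t u : ℝ)‖ ^ p := by
      apply tsum_eq_sum
      intro u hu
      rw [hU, Finset.mem_union, not_or, memPF, memPF] at hu
      simp [hF, hu.1, hu.2, Real.zero_rpow (ne_of_gt hp0)]
    have h2 : (∑ u ∈ U, ‖(F s u - F t u : ℝ)‖ ^ p)
        = ∑ u ∈ U, (if Cond u then (1:ℝ) else 0) := by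
      apply Finset.sum_congr rfl
      intro u _
      by_cases h1 : u.1 <+: s.1 <;> by_cases h2 : u.1 <+: t.1 <;>
        simp [hF, hCond, h1, h2, Real.zero_rpow (ne_of_gt hp0),
          Real.one_rpow, Real.rpow_natCast]
    have h3 : (∑ u ∈ U, (if Cond u then (1:ℝ) else 0)) = (U.filter Cond).card := by
      rw [Finset.sum_ite, Finset.sum_const, Finset.sum_const]
      simp
    set A : Finset T := (Finset.Ioc c s.1.length).image (fun k => (⟨s.1.take k, hlen s k⟩ : T))
      with hA
    set B : Finset T := (Finset.Ioc c t.1.length).image (fun k => (⟨t.1.take k, hlen t k⟩ : T))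
      with hB
    have memA : ∀ u : T, u ∈ A ↔ u.1 <+: s.1 ∧ ¬ u.1 <+: t.1 := by
      intro u
      simp only [hA, Finset.mem_image, Finset.mem_Ioc]
      constructor
      · rintro ⟨k, ⟨hk1, hk2⟩, rfl⟩
        have hlk : (s.1.take k).length = k := by simp [min_le_iff]; omega
        refine ⟨List.take_prefix _ _, ?_⟩
        rw [prefix_iff_le_cpl _ _ _ (List.take_prefix _ _), hlk]
        omega
      · rintro ⟨hp1, hp2⟩
        rw [prefix_iff_le_cpl _ _ _ hp1, not_le] at hp2
        exact ⟨u.1.length, ⟨hp2, hp1.length_le⟩,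
          Subtype.ext (List.prefix_iff_eq_take.mp hp1).symm⟩
    have memB : ∀ u : T, u ∈ B ↔ u.1 <+: t.1 ∧ ¬ u.1 <+: s.1 := by
      intro u
      simp only [hB, Finset.mem_image, Finset.mem_Ioc]
      constructor
      · rintro ⟨k, ⟨hk1, hk2⟩, rfl⟩
        have hlk : (t.1.take k).length = k := by simp [min_le_iff]; omega
        refine ⟨List.take_prefix _ _, ?_⟩
        rw [prefix_iff_le_cpl _ _ _ (List.take_prefix _ _), cpl_comm, ← hc, hlk]
        omega
      · rintro ⟨hp1, hp2⟩
        rw [prefix_iff_le_cpl _ _ _ hp1, cpl_comm, ← hc, not_le] at hp2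
        exact ⟨u.1.length, ⟨hp2, hp1.length_le⟩,
          Subtype.ext (List.prefix_iff_eq_take.mp hp1).symm⟩
    have hfilter : U.filter Cond = A ∪ B := by
      ext u
      simp only [Finset.mem_filter, hU, Finset.mem_union, memA, memB, memPF, hCond]
      tauto
    have hdisj : Disjoint A B := by
      rw [Finset.disjoint_left]
      intro u hu hv
      rw [memA] at hu
      rw [memB] at hv
      exact hu.2 hv.1
    have cardA : A.card = s.1.length - c := by
      rw [hA, Finset.card_image_of_injOn, Nat.card_Ioc]
      intro x hx y hy hxy
      rw [Finset.coe_Ioc, Set.mem_Ioc] at hx hy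
      have := congrArg (fun u : T => u.1.length) hxy
      simpa [min_eq_left hx.2, min_eq_left hy.2] using this
    have cardB : B.card = t.1.length - c := by
      rw [hB, Finset.card_image_of_injOn, Nat.card_Ioc]
      intro x hx y hy hxy
      rw [Finset.coe_Ioc, Set.mem_Ioc] at hx hy
      have := congrArg (fun u : T => u.1.length) hxy
      simpa [min_eq_left hx.2, min_eq_left hy.2] using this
    rw [h1, h2, h3, hfilter, Finset.card_union_of_disjoint hdisj, cardA, cardB]
    norm_cast
  -- conclude from key
  have hnn : 0 ≤ ‖f s - f t‖ := norm_nonneg _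
  set d := treeDist s.1 t.1 with hd
  have hnorm : ‖f s - f t‖ = (d:ℝ) ^ (1/p) := by
    have h := congrArg (fun x : ℝ => x ^ (1/p)) key
    simpa [← Real.rpow_mul hnn, mul_inv_cancel₀ (ne_of_gt hp0)] using h
  rcases Nat.eq_zero_or_pos d with h0 | h1
  · rw [hnorm, h0]
    simp [Real.zero_rpow (inv_ne_zero (ne_of_gt hp0)), one_div]
  · have hd2N : d ≤ 2 * N := by
      have h1 : d ≤ s.1.length + t.1.length := by
        rw [hd, treeDist]; omega
      have := s.2; have := t.2; omega
    have hlow := hpr d h1 hd2N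
    have hone : (1:ℝ) ≤ (d:ℝ) := by exact_mod_cast h1
    constructor
    · rw [hnorm]
      calc (1/2 : ℝ) * d = (d:ℝ)/2 := by ring
        _ ≤ (d:ℝ) ^ (1/p) := hlow
    · rw [hnorm]
      calc (d:ℝ) ^ (1/p) ≤ (d:ℝ) ^ (1:ℝ) :=
            Real.rpow_le_rpow_of_exponent_le hone (by rw [div_le_one (by linarith)]; linarith)
        _ = d := Real.rpow_one _
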